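/- Suppose f ∈ PLF(ℝ) has leftmost and rightmost gradients satisfying γ_R(f) · γ_L(f) = 1; that is, there are real numbers a_L, b_L, a_R, b_R and M > 0 with f(x) = a_L·x + b_L for all x ≤ −M, f(x) = a_R·x + b_R for all x ≥ M, and a_R · a_L = 1. Then f can be written as a composite of finitely many involutions belonging to PLF(ℝ). -/

import Mathlib

/-- `f` is a homeomorphism of `ℝ`: a bijection of `ℝ` that is continuous in both directions. -/
def IsHomeo (f : Equiv.Perm ℝ) : Prop := Continuous f ∧ Continuous f.symm

/-- `f` is locally affine at `x`: it agrees with an affine map on a neighbourhood of `x`. -/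
def IsLocallyAffineAt (f : ℝ → ℝ) (x : ℝ) : Prop :=
  ∃ a b : ℝ, ∀ᶠ y in nhds x, f y = a * y + b

/-- Membership in PLF(ℝ): a homeomorphism of `ℝ` that is locally affine at all but
finitely many points. -/
def InPLF (f : Equiv.Perm ℝ) : Prop :=
  IsHomeo f ∧ {x : ℝ | ¬ IsLocallyAffineAt (⇑f) x}.Finite

/-- Membership in PL(ℝ): a homeomorphism of `ℝ` whose set of points of non-local-affinity
has no accumulation point in `ℝ`. -/
def InPL (f : Equiv.Perm ℝ) : Prop :=
  IsHomeo f ∧ ∀ x : ℝ, ¬ AccPt x (Filter.principal {y : ℝ | ¬ IsLocallyAffineAt (⇑f) y})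

/-!
Induct on the number of points where `f` is not locally affine. Being a homeomorphism, `f` is
strictly monotone, so at such a point `t` its one-sided slopes `s₁, s₂` have the same sign. The
piecewise affine involution `σ = kinkReflection (f t) κ`, which fixes `f t` and has slopes `-κ⁻¹`
and `-κ` on either side of it, makes `σ ∘ f` affine near `t` once `κ² = s₁ / s₂` (or `s₂ / s₁` if
`f` decreases), and creates no new break points. The end slopes of `σ` multiply to `1`, so the same
holds for `σ ∘ f`, and `f = σ ∘ (σ ∘ f)`. Finally an affine `f` with `γ_R γ_L = 1` is `x ↦ ±x + b`,
which is a reflection or a product of two reflections.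
-/

open Filter Topology Set Function

noncomputable section

-- Where `f` is locally affine this is its affine germ; elsewhere `deriv` may be a junk value.
def tangentLine (f : ℝ → ℝ) (x : ℝ) : ℝ → ℝ := fun z => f x + deriv f x * (z - x)

theorem IsLocallyAffineAt.eventually_tangentLine_eq {f : ℝ → ℝ} {x : ℝ}
    (h : IsLocallyAffineAt f x) : ∀ᶠ y in 𝓝 x, tangentLine f y = tangentLine f x := by
  obtain ⟨a, b, hab⟩ := h
  have hline : ∀ᶠ y in 𝓝 x, tangentLine f y = fun z => a * z + b := by
    filter_upwards [hab.eventually_nhds] with y hy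
    have hderiv : deriv f y = a :=
      ((((hasDerivAt_id y).const_mul a).add_const b).congr_of_eventuallyEq hy).deriv.trans
        (mul_one a)
    funext z
    simp only [tangentLine, hderiv, hy.self_of_nhds]
    ring
  filter_upwards [hline] with y hy
  rw [hy, hline.self_of_nhds]

theorem IsPreconnected.exists_affine_of_isLocallyAffineAt {s : Set ℝ} (hs : IsPreconnected s)
    {f : ℝ → ℝ} (h : ∀ x ∈ s, IsLocallyAffineAt f x) : ∃ a b, ∀ x ∈ s, f x = a * x + b := by
  rcases s.eq_empty_or_nonempty with rfl | ⟨x₀, hx₀⟩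
  · exact ⟨0, 0, by simp⟩
  refine ⟨deriv f x₀, f x₀ - deriv f x₀ * x₀, fun x hx => ?_⟩
  have hline : tangentLine f x = tangentLine f x₀ :=
    hs.induction₂ (fun x y => tangentLine f x = tangentLine f y)
      (fun x hx => nhdsWithin_le_nhds ((h x hx).eventually_tangentLine_eq.mono fun _ => Eq.symm))
      (fun _ _ _ _ _ _ => Eq.trans) (fun _ _ _ _ => Eq.symm) hx hx₀
  have hx' := congrFun hline x
  simp only [tangentLine, sub_self, mul_zero, add_zero] at hx'
  rw [hx']
  ring

theorem exists_affine_Icc_of_isLocallyAffineAt {f : ℝ → ℝ} (hf : Continuous f) {a b : ℝ}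
    (hab : a < b) (h : ∀ x ∈ Ioo a b, IsLocallyAffineAt f x) :
    ∃ s c, ∀ x ∈ Icc a b, f x = s * x + c := by
  obtain ⟨s, c, hsc⟩ := isPreconnected_Ioo.exists_affine_of_isLocallyAffineAt h
  refine ⟨s, c, ?_⟩
  have hcl := (show EqOn f (fun x => s * x + c) (Ioo a b) from hsc).closure hf (by fun_prop)
  rwa [closure_Ioo hab.ne] at hcl

theorem StrictMono.slope_pos {f : ℝ → ℝ} (hf : StrictMono f) {a b s c : ℝ} (hab : a < b)
    (h : ∀ x ∈ Icc a b, f x = s * x + c) : 0 < s := by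
  have hfab := hf hab
  rw [h a (left_mem_Icc.2 hab.le), h b (right_mem_Icc.2 hab.le)] at hfab
  nlinarith

theorem StrictAnti.slope_neg {f : ℝ → ℝ} (hf : StrictAnti f) {a b s c : ℝ} (hab : a < b)
    (h : ∀ x ∈ Icc a b, f x = s * x + c) : s < 0 := by
  have hfab := hf hab
  rw [h a (left_mem_Icc.2 hab.le), h b (right_mem_Icc.2 hab.le)] at hfab
  nlinarith

def EventuallyAffine (f : ℝ → ℝ) (l : Filter ℝ) (a : ℝ) : Prop :=
  ∃ b, ∀ᶠ x in l, f x = a * x + b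

namespace EventuallyAffine

variable {f g : ℝ → ℝ} {l l' : Filter ℝ} {a c : ℝ}

theorem mono (h : EventuallyAffine f l a) (hl : l' ≤ l) : EventuallyAffine f l' a :=
  h.imp fun _ hb => hl hb

theorem comp (hg : EventuallyAffine g l' c) (hf : EventuallyAffine f l a) (hfl : Tendsto f l l') :
    EventuallyAffine (g ∘ f) l (c * a) := by
  obtain ⟨d, hd⟩ := hg
  obtain ⟨b, hb⟩ := hf
  refine ⟨c * b + d, ?_⟩
  filter_upwards [hb, hfl.eventually hd] with x hfx hgx
  rw [comp_apply, hgx, hfx]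
  ring

theorem slope_unique [l.NeBot] (hl : l ≤ cofinite) (h₁ : EventuallyAffine f l a)
    (h₂ : EventuallyAffine f l c) : a = c := by
  obtain ⟨b, hb⟩ := h₁
  obtain ⟨d, hd⟩ := h₂
  by_contra hne
  have hpt : ∀ᶠ x in l, x = (d - b) / (a - c) := by
    filter_upwards [hb, hd] with x hxb hxd
    rw [eq_div_iff (sub_ne_zero.2 hne)]
    linear_combination hxd - hxb
  have hnpt : ∀ᶠ x in l, x ≠ (d - b) / (a - c) := hl (finite_singleton _).compl_mem_cofinite
  obtain ⟨x, hx, hx'⟩ := (hpt.and hnpt).exists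
  exact hx' hx

theorem tailSlopes_comp (hf : Monotone f ∨ Antitone f) (hsurj : Surjective f) {cL cR aL aR : ℝ}
    (hgB : EventuallyAffine g atBot cL) (hgT : EventuallyAffine g atTop cR)
    (hfB : EventuallyAffine f atBot aL) (hfT : EventuallyAffine f atTop aR) :
    ∃ aL' aR', aR' * aL' = cR * cL * (aR * aL) ∧
      EventuallyAffine (g ∘ f) atBot aL' ∧ EventuallyAffine (g ∘ f) atTop aR' := by
  have hunb : ∀ y, (∃ x, y ≤ f x) ∧ ∃ x, f x ≤ y := fun y =>
    let ⟨x, hx⟩ := hsurj y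
    ⟨⟨x, hx.ge⟩, ⟨x, hx.le⟩⟩
  rcases hf with hf | hf
  · exact ⟨cL * aL, cR * aR, by ring,
      hgB.comp hfB (tendsto_atBot_atBot_of_monotone hf fun y => (hunb y).2),
      hgT.comp hfT (tendsto_atTop_atTop_of_monotone hf fun y => (hunb y).1)⟩
  · exact ⟨cR * aL, cL * aR, by ring,
      hgT.comp hfB (tendsto_atBot_atTop_of_antitone hf fun y => (hunb y).1),
      hgB.comp hfT (tendsto_atTop_atBot_of_antitone hf fun y => (hunb y).2)⟩

end EventuallyAffine

theorem IsLocallyAffineAt.comp {f g : ℝ → ℝ} {x : ℝ} (hg : IsLocallyAffineAt g (f x))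
    (hf : IsLocallyAffineAt f x) (hfx : ContinuousAt f x) : IsLocallyAffineAt (g ∘ f) x :=
  let ⟨c, hg⟩ := hg
  let ⟨a, hf⟩ := hf
  ⟨c * a, EventuallyAffine.comp hg hf hfx⟩

theorem isLocallyAffineAt_of_nhdsLE_nhdsGE {f : ℝ → ℝ} {t a : ℝ}
    (h₁ : EventuallyAffine f (𝓝[≤] t) a) (h₂ : EventuallyAffine f (𝓝[≥] t) a) :
    IsLocallyAffineAt f t := by
  obtain ⟨b₁, hb₁⟩ := h₁
  obtain ⟨b₂, hb₂⟩ := h₂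
  obtain rfl : b₁ = b₂ := by
    have ht := (hb₁.self_of_nhdsWithin self_mem_Iic).symm.trans (hb₂.self_of_nhdsWithin self_mem_Ici)
    linarith
  exact ⟨a, b₁, by rw [← nhdsLE_sup_nhdsGE]; exact eventually_sup.2 ⟨hb₁, hb₂⟩⟩

def kinkReflection (q κ x : ℝ) : ℝ := if x ≤ q then q - κ⁻¹ * (x - q) else q - κ * (x - q)

section kinkReflection

variable {q κ x : ℝ}

theorem kinkReflection_of_le (h : x ≤ q) : kinkReflection q κ x = q - κ⁻¹ * (x - q) := if_pos h

theorem kinkReflection_of_ge (h : q ≤ x) : kinkReflection q κ x = q - κ * (x - q) := by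
  rcases h.eq_or_lt with rfl | h
  · simp [kinkReflection]
  · exact if_neg h.not_ge

theorem kinkReflection_one (q x : ℝ) : kinkReflection q 1 x = 2 * q - x := by
  unfold kinkReflection
  split_ifs <;> ring

theorem continuous_kinkReflection (q κ : ℝ) : Continuous (kinkReflection q κ) := by
  unfold kinkReflection
  exact Continuous.if_le (by fun_prop) (by fun_prop) continuous_id continuous_const
    fun x hx => by simp [hx]

theorem kinkReflection_involutive (q : ℝ) (hκ : 0 < κ) : Involutive (kinkReflection q κ) := by
  intro x
  rcases le_total x q with hx | hx
  · have hq : q ≤ kinkReflection q κ x := by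
      rw [kinkReflection_of_le hx]
      nlinarith [inv_pos.2 hκ]
    rw [kinkReflection_of_ge hq, kinkReflection_of_le hx]
    field_simp
    ring
  · have hq : kinkReflection q κ x ≤ q := by
      rw [kinkReflection_of_ge hx]
      nlinarith
    rw [kinkReflection_of_le hq, kinkReflection_of_ge hx]
    field_simp
    ring

theorem eventuallyAffine_kinkReflection_Iic (q κ : ℝ) :
    EventuallyAffine (kinkReflection q κ) (𝓟 (Iic q)) (-κ⁻¹) :=
  ⟨q + κ⁻¹ * q, eventually_principal.2 fun _ hx => by rw [kinkReflection_of_le hx]; ring⟩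

theorem eventuallyAffine_kinkReflection_Ici (q κ : ℝ) :
    EventuallyAffine (kinkReflection q κ) (𝓟 (Ici q)) (-κ) :=
  ⟨q + κ * q, eventually_principal.2 fun _ hx => by rw [kinkReflection_of_ge hx]; ring⟩

theorem isLocallyAffineAt_kinkReflection (hx : x ≠ q) :
    IsLocallyAffineAt (kinkReflection q κ) x := by
  rcases hx.lt_or_gt with hx | hx
  · exact ⟨_, (eventuallyAffine_kinkReflection_Iic q κ).mono (le_principal_iff.2 (Iic_mem_nhds hx))⟩
  · exact ⟨_, (eventuallyAffine_kinkReflection_Ici q κ).mono (le_principal_iff.2 (Ici_mem_nhds hx))⟩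

theorem isLocallyAffineAt_kinkReflection_comp_of_monotone {f : ℝ → ℝ} {t s₁ s₂ : ℝ}
    (hf : Monotone f) (h₁ : EventuallyAffine f (𝓝[≤] t) s₁)
    (h₂ : EventuallyAffine f (𝓝[≥] t) s₂) (hκ : κ⁻¹ * s₁ = κ * s₂) :
    IsLocallyAffineAt (kinkReflection (f t) κ ∘ f) t := by
  refine isLocallyAffineAt_of_nhdsLE_nhdsGE (a := -κ⁻¹ * s₁)
    ((eventuallyAffine_kinkReflection_Iic _ κ).comp h₁
      (tendsto_principal.2 (eventually_nhdsWithin_of_forall fun _ hy => hf hy))) ?_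
  rw [neg_mul, hκ, ← neg_mul]
  exact (eventuallyAffine_kinkReflection_Ici _ κ).comp h₂
    (tendsto_principal.2 (eventually_nhdsWithin_of_forall fun _ hy => hf hy))

theorem isLocallyAffineAt_kinkReflection_comp_of_antitone {f : ℝ → ℝ} {t s₁ s₂ : ℝ}
    (hf : Antitone f) (h₁ : EventuallyAffine f (𝓝[≤] t) s₁)
    (h₂ : EventuallyAffine f (𝓝[≥] t) s₂) (hκ : κ * s₁ = κ⁻¹ * s₂) :
    IsLocallyAffineAt (kinkReflection (f t) κ ∘ f) t := by
  refine isLocallyAffineAt_of_nhdsLE_nhdsGE (a := -κ * s₁)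
    ((eventuallyAffine_kinkReflection_Ici _ κ).comp h₁
      (tendsto_principal.2 (eventually_nhdsWithin_of_forall fun _ hy => hf hy))) ?_
  rw [neg_mul, hκ, ← neg_mul]
  exact (eventuallyAffine_kinkReflection_Iic _ κ).comp h₂
    (tendsto_principal.2 (eventually_nhdsWithin_of_forall fun _ hy => hf hy))

end kinkReflection

theorem inv_sqrt_div_mul_eq {a b : ℝ} (hab : 0 < a / b) : (√(a / b))⁻¹ * a = √(a / b) * b := by
  have hb : b ≠ 0 := by
    rintro rfl
    simp at hab
  rw [inv_mul_eq_iff_eq_mul₀ (Real.sqrt_pos.2 hab).ne', ← mul_assoc, Real.mul_self_sqrt hab.le,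
    div_mul_cancel₀ a hb]

theorem exists_kinkReflection_comp_isLocallyAffineAt {f : ℝ → ℝ} (hf : Continuous f)
    (hinj : Injective f) {t : ℝ} (ht : ∀ᶠ y in 𝓝[≠] t, IsLocallyAffineAt f y) :
    ∃ κ > 0, IsLocallyAffineAt (kinkReflection (f t) κ ∘ f) t := by
  obtain ⟨l, hlt, hl⟩ :=
    mem_nhdsLT_iff_exists_Ioo_subset.1 (nhdsWithin_mono t (fun _ hy => ne_of_lt hy) ht)
  obtain ⟨u, htu, hu⟩ :=
    mem_nhdsGT_iff_exists_Ioo_subset.1 (nhdsWithin_mono t (fun _ hy => ne_of_gt hy) ht)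
  obtain ⟨s₁, c₁, h₁⟩ := exists_affine_Icc_of_isLocallyAffineAt hf hlt hl
  obtain ⟨s₂, c₂, h₂⟩ := exists_affine_Icc_of_isLocallyAffineAt hf htu hu
  have hL : EventuallyAffine f (𝓝[≤] t) s₁ := ⟨c₁, mem_of_superset (Icc_mem_nhdsLE hlt) h₁⟩
  have hR : EventuallyAffine f (𝓝[≥] t) s₂ := ⟨c₂, mem_of_superset (Icc_mem_nhdsGE htu) h₂⟩
  rcases hf.strictMono_of_inj hinj with hmono | hanti
  · have hs : 0 < s₁ / s₂ := div_pos (hmono.slope_pos hlt h₁) (hmono.slope_pos htu h₂)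
    exact ⟨√(s₁ / s₂), Real.sqrt_pos.2 hs, isLocallyAffineAt_kinkReflection_comp_of_monotone
      hmono.monotone hL hR (inv_sqrt_div_mul_eq hs)⟩
  · have hs : 0 < s₂ / s₁ :=
      div_pos_of_neg_of_neg (hanti.slope_neg htu h₂) (hanti.slope_neg hlt h₁)
    exact ⟨√(s₂ / s₁), Real.sqrt_pos.2 hs, isLocallyAffineAt_kinkReflection_comp_of_antitone
      hanti.antitone hL hR (inv_sqrt_div_mul_eq hs).symm⟩

def kinkReflectionPerm (q : ℝ) {κ : ℝ} (hκ : 0 < κ) : Equiv.Perm ℝ :=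
  (kinkReflection_involutive q hκ).toPerm _

def plfInvolutions : Set (Equiv.Perm ℝ) := {σ | InPLF σ ∧ σ * σ = 1}

theorem kinkReflectionPerm_mem_plfInvolutions (q : ℝ) {κ : ℝ} (hκ : 0 < κ) :
    kinkReflectionPerm q hκ ∈ plfInvolutions := by
  refine ⟨⟨⟨continuous_kinkReflection q κ, ?_⟩, ?_⟩, Equiv.ext (kinkReflection_involutive q hκ)⟩
  · rw [kinkReflectionPerm, Involutive.toPerm_symm]
    exact continuous_kinkReflection q κ
  · exact (finite_singleton q).subset fun x hx =>
      by_contra fun hxq => hx (isLocallyAffineAt_kinkReflection hxq)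

theorem mem_closure_plfInvolutions_of_affine {f : Equiv.Perm ℝ} {a b : ℝ}
    (hf : ∀ x, f x = a * x + b) (ha : a * a = 1) : f ∈ Submonoid.closure plfInvolutions := by
  have hρ q := Submonoid.subset_closure (kinkReflectionPerm_mem_plfInvolutions q one_pos)
  rcases mul_self_eq_one_iff.1 ha with rfl | rfl
  · have hf' : f = kinkReflectionPerm (b / 2) one_pos * kinkReflectionPerm 0 one_pos :=
      Equiv.ext fun x => by
        simp only [Equiv.Perm.mul_apply, kinkReflectionPerm, Involutive.coe_toPerm,
          kinkReflection_one, hf]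
        ring
    exact hf' ▸ mul_mem (hρ (b / 2)) (hρ 0)
  · have hf' : f = kinkReflectionPerm (b / 2) one_pos := Equiv.ext fun x => by
      simp only [kinkReflectionPerm, Involutive.coe_toPerm, kinkReflection_one, hf]
      ring
    exact hf' ▸ hρ (b / 2)

theorem mem_closure_plfInvolutions (S : Finset ℝ) :
    ∀ f : Equiv.Perm ℝ, Continuous f → (∀ x ∉ S, IsLocallyAffineAt f x) →
      ∀ aL aR, aR * aL = 1 → EventuallyAffine f atBot aL → EventuallyAffine f atTop aR →
        f ∈ Submonoid.closure plfInvolutions := by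
  classical
  induction S using Finset.induction_on with
  | empty =>
    intro f _ hloc aL aR hgrad hL hR
    obtain ⟨a, b, hab⟩ := isPreconnected_univ.exists_affine_of_isLocallyAffineAt
      fun x _ => hloc x (Finset.notMem_empty x)
    have haffine l : EventuallyAffine f l a := ⟨b, Eventually.of_forall fun x => hab x (mem_univ x)⟩
    have haL := (haffine atBot).slope_unique atBot_le_cofinite hL
    have haR := (haffine atTop).slope_unique atTop_le_cofinite hR
    rw [← haR, ← haL] at hgrad
    exact mem_closure_plfInvolutions_of_affine (fun x => hab x (mem_univ x)) hgrad
  | insert t S htS ih =>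
    intro f hf hloc aL aR hgrad hL hR
    have hpunct : ∀ᶠ y in 𝓝[≠] t, IsLocallyAffineAt f y := by
      filter_upwards [self_mem_nhdsWithin,
        nhdsWithin_le_nhds (S.finite_toSet.isClosed.isOpen_compl.mem_nhds htS)] with y hyt hyS
      exact hloc y (by simp_all)
    obtain ⟨κ, hκ, hκt⟩ := exists_kinkReflection_comp_isLocallyAffineAt hf f.injective hpunct
    set σ := kinkReflectionPerm (f t) hκ
    have hσ : σ ∈ plfInvolutions := kinkReflectionPerm_mem_plfInvolutions (f t) hκ
    obtain ⟨aL', aR', hgrad', hL', hR'⟩ := EventuallyAffine.tailSlopes_comp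
      ((hf.strictMono_of_inj f.injective).imp StrictMono.monotone StrictAnti.antitone) f.surjective
      ((eventuallyAffine_kinkReflection_Iic (f t) κ).mono (le_principal_iff.2 (Iic_mem_atBot _)))
      ((eventuallyAffine_kinkReflection_Ici (f t) κ).mono (le_principal_iff.2 (Ici_mem_atTop _)))
      hL hR
    have hσf : σ * f ∈ Submonoid.closure plfInvolutions := by
      refine ih (σ * f) ((continuous_kinkReflection _ _).comp hf) (fun x hx => ?_) aL' aR' ?_ hL' hR'
      · rcases eq_or_ne x t with rfl | hxt
        · exact hκt
        · exact (isLocallyAffineAt_kinkReflection (f.injective.ne hxt)).comp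
            (hloc x (by simp [hxt, hx])) hf.continuousAt
      · rw [hgrad', hgrad, mul_one, neg_mul_neg, mul_inv_cancel₀ hκ.ne']
    rw [← one_mul f, ← hσ.2, mul_assoc]
    exact mul_mem (Submonoid.subset_closure hσ) hσf

end

theorem stmt_19_general (f : Equiv.Perm ℝ) (hf : InPLF f)
    (aL bL aR bR M : ℝ)
    (hL : ∀ x : ℝ, x ≤ -M → f x = aL * x + bL)
    (hR : ∀ x : ℝ, M ≤ x → f x = aR * x + bR)
    (hgrad : aR * aL = 1) :
    ∃ (n : ℕ) (g : Fin n → Equiv.Perm ℝ),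
      (∀ i, InPLF (g i) ∧ g i * g i = 1) ∧ f = (List.ofFn g).prod := by
  obtain ⟨⟨hcont, -⟩, hfin⟩ := hf
  have hmem := mem_closure_plfInvolutions hfin.toFinset f hcont (fun x hx => by simpa using hx)
    aL aR hgrad ⟨bL, eventually_atBot.2 ⟨-M, hL⟩⟩ ⟨bR, eventually_atTop.2 ⟨M, hR⟩⟩
  obtain ⟨l, hl, rfl⟩ := Submonoid.exists_list_of_mem_closure hmem
  exact ⟨l.length, l.get, fun i => hl _ (l.get_mem i), congrArg List.prod (List.ofFn_get l).symm⟩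

/-- If f ∈ PLF(ℝ) has leftmost and rightmost gradients with γ_R(f) · γ_L(f) = 1, then f
is a composite of finitely many involutions of PLF(ℝ). -/
theorem stmt_19 (f : Equiv.Perm ℝ) (hf : InPLF f)
    (aL bL aR bR M : ℝ) (hM : 0 < M)
    (hL : ∀ x : ℝ, x ≤ -M → f x = aL * x + bL)
    (hR : ∀ x : ℝ, M ≤ x → f x = aR * x + bR)
    (hgrad : aR * aL = 1) :
    ∃ (n : ℕ) (g : Fin n → Equiv.Perm ℝ),
      (∀ i, InPLF (g i) ∧ g i * g i = 1) ∧ f = (List.ofFn g).prod :=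
  stmt_19_general f hf aL bL aR bR M hL hR hgrad
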